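/- Let N be a single-qubit linear map of the form N(ρ) = U N'(V ρ V†) U†, where U,V are 2×2 unitary matrices and N' is the single-qubit normal-form map with parameters (D,t). Then for every nonempty subset A ⊆ {1,…,n} and every Hermitian 2^n×2^n matrix O_A = Σ_{P∈P_n, supp(P)=A} a_P P (a real linear combination of Pauli strings with support exactly A): ‖N^{†⊗n}(O_A)‖_F² ≤ Υ(D,t)^{|A|} · ‖O_A‖_F². -/

import Mathlib

open scoped Kronecker
open Matrix
open scoped ComplexOrder

noncomputable section

abbrev QMat := Matrix (Fin 2) (Fin 2) ℂ

abbrev NMat (n : ℕ) := Matrix (Fin n → Fin 2) (Fin n → Fin 2) ℂ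

/-- The four single-qubit Pauli matrices `I, X, Y, Z`. -/
def pauli : Fin 4 → QMat :=
  ![1, !![0, 1; 1, 0], !![0, -Complex.I; Complex.I, 0], !![1, 0; 0, -1]]

/-- The non-identity Paulis `X, Y, Z`. -/
def pauliXYZ (i : Fin 3) : QMat := pauli i.succ

/-- The `n`-qubit Pauli string indexed by `s : Fin n → Fin 4`. -/
def pauliString {n : ℕ} (s : Fin n → Fin 4) : NMat n :=
  Matrix.of fun i j => ∏ k, pauli (s k) (i k) (j k)

/-- Support of a Pauli string. -/
def psupp {n : ℕ} (s : Fin n → Fin 4) : Finset (Fin n) :=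
  Finset.univ.filter fun k => s k ≠ 0

/-- The observable with real Pauli coefficients `a`. -/
def obsOf {n : ℕ} (a : (Fin n → Fin 4) → ℝ) : NMat n :=
  ∑ s : Fin n → Fin 4, (a s : ℂ) • pauliString s

/-- Normalized Frobenius norm squared, `‖M‖_F² = Tr[Mᴴ M]/dim`. -/
def frobSq {m : Type*} [Fintype m] (M : Matrix m m ℂ) : ℝ :=
  (Matrix.trace (Mᴴ * M)).re / (Fintype.card m : ℝ)

def IsUnitary {m : Type*} [Fintype m] [DecidableEq m] (U : Matrix m m ℂ) : Prop :=
  U * Uᴴ = 1 ∧ Uᴴ * U = 1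

/-- Hilbert–Schmidt adjoint of a (linear) map on matrices:
`Φ†(A) i j = conj (Tr[Aᴴ Φ(E_{ij})])`. -/
def hsAdj {m : Type*} [Fintype m] [DecidableEq m]
    (Φ : Matrix m m ℂ → Matrix m m ℂ) (A : Matrix m m ℂ) : Matrix m m ℂ :=
  Matrix.of fun i j => (starRingEnd ℂ) (Matrix.trace (Aᴴ * Φ (Matrix.single i j 1)))

/-- Pauli transfer matrix entry of a single-qubit map. -/
def ptm (Φ : QMat → QMat) (a b : Fin 4) : ℂ :=
  Matrix.trace (pauli a * Φ (pauli b)) / 2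

/-- Tensor product `Φ 0 ⊗ Φ 1 ⊗ ⋯ ⊗ Φ (n-1)` of single-qubit (linear) maps,
defined via the Pauli transfer matrices. -/
def tensorMap {n : ℕ} (Φ : Fin n → QMat → QMat) (M : NMat n) : NMat n :=
  ∑ s : Fin n → Fin 4, ∑ t : Fin n → Fin 4,
    ((∏ k, ptm (Φ k) (s k) (t k)) * (Matrix.trace (pauliString t * M) / ((2 : ℂ) ^ n))) •
      pauliString s

/-- `n`-fold tensor power `Φ^{⊗n}` of a single-qubit (linear) map. -/
def tensorPow (n : ℕ) (Φ : QMat → QMat) : NMat n → NMat n :=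
  tensorMap fun _ => Φ

/-- Tensor product of `n` single-qubit matrices. -/
def qprod {n : ℕ} (V : Fin n → QMat) : NMat n :=
  Matrix.of fun i j => ∏ k, V k (i k) (j k)

/-- The single-qubit normal-form map `N'` with parameters `(D, t)`:
`N'(I) = I + Σ t_i σ_i` and `N'(σ_i) = D_i σ_i`. -/
def normalForm (D t : Fin 3 → ℝ) (M : QMat) : QMat :=
  (Matrix.trace M / 2) • (1 + ∑ i, (t i : ℂ) • pauliXYZ i) +
    ∑ i, ((D i : ℂ) * (Matrix.trace (pauliXYZ i * M) / 2)) • pauliXYZ i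

/-- `Υ(D,t) = max_{‖a‖₂=1} Σ_i a_i² D_i² + (Σ_i a_i t_i)²`. -/
def Upsilon (D t : Fin 3 → ℝ) : ℝ :=
  sSup { r : ℝ | ∃ a : Fin 3 → ℝ, (∑ i, a i ^ 2) = 1 ∧
    r = (∑ i, a i ^ 2 * D i ^ 2) + (∑ i, a i * t i) ^ 2 }

/-- Choi matrix of a single-qubit map. -/
def choi (Φ : QMat → QMat) : Matrix (Fin 2 × Fin 2) (Fin 2 × Fin 2) ℂ :=
  Matrix.of fun p q => Φ (Matrix.single p.1 q.1 1) p.2 q.2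

/-- A single-qubit quantum channel: linear, trace preserving, completely positive. -/
structure IsChannel (Φ : QMat → QMat) : Prop where
  linear : IsLinearMap ℂ Φ
  tracePreserving : ∀ M, Matrix.trace (Φ M) = Matrix.trace M
  completelyPositive : (choi Φ).PosSemidef

/-- Unitary 1-design (finitely supported distribution). -/
def IsOneDesign {ι : Type*} [Fintype ι] (w : ι → ℝ) (W : ι → QMat) : Prop :=
  ∀ M : QMat, ∑ i, (w i : ℂ) • (W i * M * (W i)ᴴ) = (Matrix.trace M / 2) • (1 : QMat)

/-- The swap (flip) operator on two qubits. -/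
def swapOp : Matrix (Fin 2 × Fin 2) (Fin 2 × Fin 2) ℂ :=
  Matrix.of fun p q => if p.1 = q.2 ∧ p.2 = q.1 then 1 else 0

/-- Unitary 2-design: the twirl of any `M` matches the Haar value
`c_I • 1 + c_F • F` (closed form of the Haar average on `U(2)`). -/
def IsTwoDesign {ι : Type*} [Fintype ι] (w : ι → ℝ) (W : ι → QMat) : Prop :=
  ∀ M : Matrix (Fin 2 × Fin 2) (Fin 2 × Fin 2) ℂ,
    ∑ i, (w i : ℂ) • ((W i ⊗ₖ W i) * M * (W i ⊗ₖ W i)ᴴ) =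
      ((Matrix.trace M - Matrix.trace (swapOp * M) / 2) / 3) •
          (1 : Matrix (Fin 2 × Fin 2) (Fin 2 × Fin 2) ℂ) +
        ((Matrix.trace (swapOp * M) - Matrix.trace M / 2) / 3) • swapOp

/-- `η`-approximate scrambler (finitely supported distribution over `U(2)`). -/
def IsApproxScrambler {ι : Type*} [Fintype ι] (η : ℝ) (w : ι → ℝ) (U : ι → QMat) : Prop :=
  (∀ a b : Fin 4, a ≠ b →
      ∑ i, (w i : ℂ) • (((U i)ᴴ * pauli a * U i) ⊗ₖ ((U i)ᴴ * pauli b * U i)) = 0) ∧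
    ∀ a b : Fin 3,
      ∑ i, w i * ((Matrix.trace (pauliXYZ a * U i * pauliXYZ b * (U i)ᴴ)).re / 2) ^ 2 ≤
        (1 + 2 * η) / 3

/-- Locally unbiased distribution over linear maps on `n`-qubit matrices. -/
def LocallyUnbiased (n : ℕ) {ι : Type*} [Fintype ι] (w : ι → ℝ)
    (C : ι → NMat n → NMat n) : Prop :=
  ∃ (m : ℕ) (v : Fin n → Fin m → ℝ) (W : Fin n → Fin m → QMat),
    (∀ j k, 0 ≤ v j k) ∧ (∀ j, ∑ k, v j k = 1) ∧ (∀ j k, IsUnitary (W j k)) ∧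
      (∀ j, IsOneDesign (v j) (W j)) ∧
      ∀ A B : NMat n,
        ∑ i, (w i : ℂ) • (C i A ⊗ₖ C i B) =
          ∑ i, ∑ f : Fin n → Fin m,
            ((w i * ∏ j, v j (f j) : ℝ) : ℂ) •
              (C i (qprod (fun j => W j (f j)) * A * (qprod fun j => W j (f j))ᴴ) ⊗ₖ
                C i (qprod (fun j => W j (f j)) * B * (qprod fun j => W j (f j))ᴴ))

/-- Pauli-invariant distribution over linear maps on `n`-qubit matrices. -/
def PauliInvariant (n : ℕ) {ι : Type*} [Fintype ι] (w : ι → ℝ)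
    (C : ι → NMat n → NMat n) : Prop :=
  ∀ A B : NMat n,
    ∑ i, (w i : ℂ) • (C i A ⊗ₖ C i B) =
      ((4 : ℂ) ^ n)⁻¹ • ∑ r : Fin n → Fin 4, ∑ i, (w i : ℂ) •
        (C i (pauliString r * A * pauliString r) ⊗ₖ C i (pauliString r * B * pauliString r))

/-- Fourier coefficient `Φ_γ(C) = Π_j 2^{-n} Tr[P_j C_j(P_{j-1})]` of a Pauli path. -/
def pathCoeff {n L : ℕ} (Cs : Fin L → NMat n → NMat n)
    (γ : Fin (L + 1) → Fin n → Fin 4) : ℂ :=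
  ∏ j : Fin L,
    (Matrix.trace (pauliString (γ j.succ) * Cs j (pauliString (γ j.castSucc))) / ((2 : ℂ) ^ n))

/-- Path weight `|γ| = Σ_{j=1}^L |P_j|`. -/
def pathWeight {n L : ℕ} (γ : Fin (L + 1) → Fin n → Fin 4) : ℕ :=
  ∑ j : Fin L, (psupp (γ j.succ)).card

/-- The (non-physical) map `Ñ_p` with `Ñ_p(I) = (N(I) - pI)/(1-p)` and
`Ñ_p(σ) = N(σ)/(1-p)` for `σ ∈ {X,Y,Z}`. -/
def tildeMap (N : QMat → QMat) (p : ℝ) (M : QMat) : QMat :=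
  (Matrix.trace M / 2) • (((1 : ℂ) - (p : ℂ))⁻¹ • (N 1 - (p : ℂ) • (1 : QMat))) +
    ∑ i : Fin 3, (Matrix.trace (pauliXYZ i * M) / 2) • (((1 : ℂ) - (p : ℂ))⁻¹ • N (pauliXYZ i))

/-- The layers of an `L`-layered noisy circuit: `C_j(ρ) = N^{⊗n}(U_j ρ U_j†)` for `j < L`,
and the last layer is followed by the single-qubit layer `V`. -/
def layerMaps {n L : ℕ} (Nm : QMat → QMat) (U : Fin L → NMat n) (Vt : NMat n)
    (j : Fin L) (ρ : NMat n) : NMat n :=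
  if j.val = L - 1 then Vt * tensorPow n Nm (U j * ρ * (U j)ᴴ) * Vtᴴ
  else tensorPow n Nm (U j * ρ * (U j)ᴴ)

/-- Composition `C_L ∘ ⋯ ∘ C_1` of the layers. -/
def circuitOf {n L : ℕ} (lm : Fin L → NMat n → NMat n) (ρ : NMat n) : NMat n :=
  (List.finRange L).foldl (fun σ j => lm j σ) ρ

/-- Operator (spectral) norm of a matrix, as the `ℓ²→ℓ²` operator norm. -/
def specNorm {m : Type*} [Fintype m] (M : Matrix m m ℂ) : ℝ :=
  Real.sqrt (sSup { r : ℝ | ∃ v : m → ℂ,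
    (∑ x, Complex.normSq (v x)) = 1 ∧ r = ∑ x, Complex.normSq (M.mulVec v x) })

/-- The old Mathlib `Matrix.PosSemidef.sqrt`, spelled out. -/
def psdSqrt {m : Type*} [Fintype m] [DecidableEq m] {A : Matrix m m ℂ} (hA : A.PosSemidef) :
    Matrix m m ℂ :=
  (hA.1.eigenvectorUnitary : Matrix m m ℂ) * Matrix.diagonal ((↑) ∘ Real.sqrt ∘ hA.1.eigenvalues) *
    (star hA.1.eigenvectorUnitary : Matrix m m ℂ)

/-- Trace norm `‖M‖₁ = Tr √(Mᴴ M)` (sum of singular values). -/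
def traceNorm {m : Type*} [Fintype m] [DecidableEq m] (M : Matrix m m ℂ) : ℝ :=
  (Matrix.trace (psdSqrt (Matrix.posSemidef_conjTranspose_mul_self M))).re

/-!
`N†` is unital, and on traceless operators it contracts the normalized Frobenius norm squared by
the factor `Υ(D,t)`: conjugation by `U` and `V` preserves that norm, and writing a traceless `τ` as
`Σ cᵢ σᵢ`, the adjoint normal form `N'†(τ) = (Σ tᵢ cᵢ) I + Σ Dᵢ cᵢ σᵢ` has norm squared
`Σ Dᵢ² |cᵢ|² + |Σ tᵢ cᵢ|² ≤ Υ Σ |cᵢ|²`. In the Pauli basis `N^{†⊗n}` acts through the tensor power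
of the single-qubit transfer matrix, and the coefficients of `O_A` are supported on `{X,Y,Z}` at
the sites of `A` and on `{I}` elsewhere; peeling off one tensor factor at a time gives `Υ^{|A|}`.
-/

section HilbertSchmidtAdjoint

variable {m : Type*} [Fintype m] [DecidableEq m]

lemma trace_conjTranspose_mul_single (M : Matrix m m ℂ) (i j : m) :
    trace (Mᴴ * single i j 1) = star (M i j) := by
  simp [trace_mul_single]

lemma hsAdj_eq_of_forall_trace {Φ : Matrix m m ℂ → Matrix m m ℂ} {A M : Matrix m m ℂ}
    (h : ∀ B, trace (Aᴴ * Φ B) = trace (Mᴴ * B)) : hsAdj Φ A = M := by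
  ext i j
  simp [hsAdj, h, trace_conjTranspose_mul_single]

lemma trace_conjTranspose_hsAdj_mul {Φ : Matrix m m ℂ → Matrix m m ℂ} (hΦ : IsLinearMap ℂ Φ)
    (A B : Matrix m m ℂ) : trace ((hsAdj Φ A)ᴴ * B) = trace (Aᴴ * Φ B) := by
  let Φₗ := IsLinearMap.mk' Φ hΦ
  have hB : B = ∑ i, ∑ j, B i j • single i j 1 := by
    conv_lhs => rw [matrix_eq_sum_single B]
    simp [smul_single]
  change _ = trace (Aᴴ * Φₗ B)
  rw [hB]
  simp only [map_sum, map_smul, Matrix.mul_sum, Matrix.mul_smul, trace_sum, trace_smul,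
    trace_conjTranspose_mul_single]
  simp [hsAdj, Φₗ]

lemma isLinearMap_hsAdj (Φ : Matrix m m ℂ → Matrix m m ℂ) : IsLinearMap ℂ (hsAdj Φ) where
  map_add A B := by ext i j; simp [hsAdj, Matrix.add_mul, trace_add]
  map_smul c A := by ext i j; simp [hsAdj, trace_smul]

lemma hsAdj_conj {Φ : Matrix m m ℂ → Matrix m m ℂ} (hΦ : IsLinearMap ℂ Φ)
    (U V A : Matrix m m ℂ) :
    hsAdj (fun ρ => U * Φ (V * ρ * Vᴴ) * Uᴴ) A = Vᴴ * hsAdj Φ (Uᴴ * A * U) * V := by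
  refine hsAdj_eq_of_forall_trace fun B => ?_
  calc trace (Aᴴ * (U * Φ (V * B * Vᴴ) * Uᴴ))
      = trace ((Uᴴ * A * U)ᴴ * Φ (V * B * Vᴴ)) := by
        simp only [conjTranspose_mul, conjTranspose_conjTranspose, Matrix.mul_assoc]
        rw [trace_mul_comm Uᴴ, Matrix.mul_assoc, Matrix.mul_assoc]
    _ = trace ((hsAdj Φ (Uᴴ * A * U))ᴴ * (V * B * Vᴴ)) :=
        (trace_conjTranspose_hsAdj_mul hΦ _ _).symm
    _ = trace ((Vᴴ * hsAdj Φ (Uᴴ * A * U) * V)ᴴ * B) := by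
        simp only [conjTranspose_mul, conjTranspose_conjTranspose, Matrix.mul_assoc]
        rw [trace_mul_comm Vᴴ]; simp only [Matrix.mul_assoc]

lemma hsAdj_sum_smul {ι : Type*} [Fintype ι]
    (Φ : Matrix m m ℂ → Matrix m m ℂ) (c : ι → ℂ) (A : ι → Matrix m m ℂ) :
    hsAdj Φ (∑ i, c i • A i) = ∑ i, c i • hsAdj Φ (A i) := by
  ext j k
  simp [hsAdj, conjTranspose_sum, Matrix.sum_mul, trace_sum, Matrix.sum_apply]

end HilbertSchmidtAdjoint

section UnitaryConj

variable {m : Type*} [Fintype m] [DecidableEq m] {W : Matrix m m ℂ}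

lemma trace_conjTranspose_mul_mul (hW : W * Wᴴ = 1) (X : Matrix m m ℂ) :
    trace (Wᴴ * X * W) = trace X := by
  rw [trace_mul_comm, ← Matrix.mul_assoc, hW, Matrix.one_mul]

lemma frobSq_conjTranspose_mul_mul (hW : W * Wᴴ = 1) (X : Matrix m m ℂ) :
    frobSq (Wᴴ * X * W) = frobSq X := by
  have h : (Wᴴ * X * W)ᴴ * (Wᴴ * X * W) = Wᴴ * (Xᴴ * X) * W := by
    simp only [conjTranspose_mul, conjTranspose_conjTranspose, Matrix.mul_assoc]
    rw [← Matrix.mul_assoc W, hW, Matrix.one_mul]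
  rw [frobSq, h, trace_conjTranspose_mul_mul hW, frobSq]

end UnitaryConj

section OrthogonalBasis

variable {m ι : Type*} [Fintype m] [Fintype ι] [DecidableEq ι] {b : ι → Matrix m m ℂ}

lemma trace_mul_sum_smul_of_orthogonal
    (horth : ∀ i j, trace (b i * b j) = if i = j then (Fintype.card m : ℂ) else 0)
    (z : ι → ℂ) (i : ι) : trace (b i * ∑ j, z j • b j) = Fintype.card m * z i := by
  simp [Matrix.mul_sum, trace_sum, horth, mul_comm]

lemma frobSq_sum_smul_of_orthogonal [Nonempty m] (hb : ∀ i, (b i)ᴴ = b i)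
    (horth : ∀ i j, trace (b i * b j) = if i = j then (Fintype.card m : ℂ) else 0)
    (z : ι → ℂ) : frobSq (∑ i, z i • b i) = ∑ i, Complex.normSq (z i) := by
  have hcard : (Fintype.card m : ℝ) ≠ 0 := by positivity
  simp only [frobSq, conjTranspose_sum, conjTranspose_smul, hb, Matrix.sum_mul, smul_mul,
    trace_sum, trace_smul, trace_mul_sum_smul_of_orthogonal horth, smul_eq_mul]
  have hnormSq : ∀ i, star (z i) * (Fintype.card m * z i) =
      ((Fintype.card m * Complex.normSq (z i) : ℝ) : ℂ) := fun i => by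
    rw [Complex.ofReal_mul, Complex.normSq_eq_conj_mul_self, Complex.star_def]; push_cast; ring
  simp only [hnormSq, ← Complex.ofReal_sum, Complex.ofReal_re, ← Finset.mul_sum]
  field_simp

end OrthogonalBasis

lemma pauli_conjTranspose (a : Fin 4) : (pauli a)ᴴ = pauli a := by
  fin_cases a <;> ext i j <;> fin_cases i <;> fin_cases j <;> simp [pauli]

lemma trace_pauli_mul (a b : Fin 4) :
    trace (pauli a * pauli b) = if a = b then (Fintype.card (Fin 2) : ℂ) else 0 := by
  fin_cases a <;> fin_cases b <;>
    norm_num [pauli, trace, Fin.sum_univ_two]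

lemma pauli_expansion (X : QMat) : ∑ a, (trace (pauli a * X) / 2) • pauli a = X := by
  ext i j; fin_cases i <;> fin_cases j <;>
    simp [pauli, Fin.sum_univ_four, trace, mul_apply, Fin.sum_univ_two] <;>
    ring_nf <;> simp <;> ring

lemma frobSq_pauli_sum_smul (z : Fin 4 → ℂ) :
    frobSq (∑ a, z a • pauli a) = ∑ a, Complex.normSq (z a) :=
  frobSq_sum_smul_of_orthogonal pauli_conjTranspose trace_pauli_mul z

lemma frobSq_pauliXYZ_sum_smul (c : Fin 3 → ℂ) :
    frobSq (∑ i, c i • pauliXYZ i) = ∑ i, Complex.normSq (c i) :=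
  frobSq_sum_smul_of_orthogonal (fun i => pauli_conjTranspose i.succ)
    (fun i j => by simp [pauliXYZ, trace_pauli_mul]) c

lemma pauliXYZ_expansion {X : QMat} (hX : trace X = 0) :
    ∑ i, (trace (pauliXYZ i * X) / 2) • pauliXYZ i = X := by
  conv_rhs => rw [← pauli_expansion X, Fin.sum_univ_succ]
  simp [pauli, hX, pauliXYZ]

lemma trace_pauli_sum_smul (y : Fin 4 → ℂ) : trace (∑ b, y b • pauli b) = 2 * y 0 := by
  simpa [pauli] using trace_mul_sum_smul_of_orthogonal trace_pauli_mul y 0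

lemma qprod_mul {n : ℕ} (V W : Fin n → QMat) : qprod V * qprod W = qprod fun k => V k * W k := by
  ext i j
  simp only [qprod, mul_apply, of_apply, Finset.prod_mul_distrib, Fintype.prod_sum]

lemma trace_qprod {n : ℕ} (V : Fin n → QMat) : trace (qprod V) = ∏ k, trace (V k) := by
  simp only [qprod, trace, diag_apply, of_apply, Fintype.prod_sum]

lemma conjTranspose_qprod {n : ℕ} (V : Fin n → QMat) : (qprod V)ᴴ = qprod fun k => (V k)ᴴ := by
  ext i j
  simp [qprod, conjTranspose_apply]

lemma pauliString_eq_qprod {n : ℕ} (s : Fin n → Fin 4) :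
    pauliString s = qprod fun k => pauli (s k) := rfl

lemma conjTranspose_pauliString {n : ℕ} (s : Fin n → Fin 4) : (pauliString s)ᴴ = pauliString s := by
  simp only [pauliString_eq_qprod, conjTranspose_qprod, pauli_conjTranspose]

lemma trace_pauliString_mul {n : ℕ} (s r : Fin n → Fin 4) :
    trace (pauliString s * pauliString r) =
      if s = r then (Fintype.card (Fin n → Fin 2) : ℂ) else 0 := by
  rw [pauliString_eq_qprod, pauliString_eq_qprod, qprod_mul, trace_qprod]
  simp only [trace_pauli_mul]
  split_ifs with h
  · simp [h]
  · obtain ⟨k, hk⟩ := Function.ne_iff.mp h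
    exact Finset.prod_eq_zero (Finset.mem_univ k) (if_neg hk)

lemma frobSq_pauliString_sum_smul {n : ℕ} (z : (Fin n → Fin 4) → ℂ) :
    frobSq (∑ s, z s • pauliString s) = ∑ s, Complex.normSq (z s) :=
  frobSq_sum_smul_of_orthogonal conjTranspose_pauliString trace_pauliString_mul z

def supportPattern {n : ℕ} (A : Finset (Fin n)) (k : Fin n) : Set (Fin 4) :=
  if k ∈ A then {0}ᶜ else {0}

lemma mem_pi_supportPattern_iff {n : ℕ} {A : Finset (Fin n)} {s : Fin n → Fin 4} :
    s ∈ Set.univ.pi (supportPattern A) ↔ psupp s = A := by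
  simp only [Set.mem_univ_pi, Finset.ext_iff, psupp, Finset.mem_filter, Finset.mem_univ, true_and]
  refine forall_congr' fun k => ?_
  by_cases hk : k ∈ A <;> simp [supportPattern, hk]

section Upsilon

variable (D t : Fin 3 → ℝ)

lemma bddAbove_upsilon : BddAbove { r : ℝ | ∃ a : Fin 3 → ℝ, (∑ i, a i ^ 2) = 1 ∧
    r = (∑ i, a i ^ 2 * D i ^ 2) + (∑ i, a i * t i) ^ 2 } := by
  refine ⟨(∑ i, D i ^ 2) + ∑ i, t i ^ 2, ?_⟩
  rintro r ⟨a, ha, rfl⟩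
  have hD : ∑ i, a i ^ 2 * D i ^ 2 ≤ ∑ i, D i ^ 2 := by
    refine Finset.sum_le_sum fun i _ => mul_le_of_le_one_left (sq_nonneg _) ?_
    exact ha ▸ Finset.single_le_sum (fun j _ => sq_nonneg (a j)) (Finset.mem_univ i)
  have ht : (∑ i, a i * t i) ^ 2 ≤ ∑ i, t i ^ 2 := by
    simpa [ha] using Finset.sum_mul_sq_le_sq_mul_sq Finset.univ a t
  linarith

lemma le_upsilon {a : Fin 3 → ℝ} (ha : ∑ i, a i ^ 2 = 1) :
    (∑ i, a i ^ 2 * D i ^ 2) + (∑ i, a i * t i) ^ 2 ≤ Upsilon D t :=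
  le_csSup (bddAbove_upsilon D t) ⟨a, ha, rfl⟩

lemma le_upsilon_mul (a : Fin 3 → ℝ) :
    (∑ i, a i ^ 2 * D i ^ 2) + (∑ i, a i * t i) ^ 2 ≤ Upsilon D t * ∑ i, a i ^ 2 := by
  set q := ∑ i, a i ^ 2
  rcases (show 0 ≤ q by positivity).eq_or_lt with hq | hq
  · have ha : a = 0 := funext fun i => by
      simpa using (Finset.sum_eq_zero_iff_of_nonneg fun j _ => sq_nonneg (a j)).1 hq.symm i
    simp [ha, ← hq]
  · have hs : √q ^ 2 = q := Real.sq_sqrt hq.le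
    have key := le_upsilon D t (a := fun i => a i / √q) (by
      simp only [div_pow, ← Finset.sum_div, hs]; exact div_self hq.ne')
    have hscale : (∑ i, (a i / √q) ^ 2 * D i ^ 2) + (∑ i, a i / √q * t i) ^ 2 =
        ((∑ i, a i ^ 2 * D i ^ 2) + (∑ i, a i * t i) ^ 2) / q := by
      simp only [div_pow, div_mul_eq_mul_div, ← Finset.sum_div, hs, add_div]
    rw [hscale, div_le_iff₀ hq] at key
    exact key

lemma upsilon_nonneg : 0 ≤ Upsilon D t := by
  have h := le_upsilon D t (a := ![1, 0, 0]) (by simp [Fin.sum_univ_three])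
  simp [Fin.sum_univ_three] at h
  exact (by positivity : (0 : ℝ) ≤ D 0 ^ 2 + t 0 ^ 2).trans h

lemma le_upsilon_mul_complex (c : Fin 3 → ℂ) :
    (∑ i, Complex.normSq (c i) * D i ^ 2) + Complex.normSq (∑ i, c i * t i) ≤
      Upsilon D t * ∑ i, Complex.normSq (c i) := by
  have hre := le_upsilon_mul D t fun i => (c i).re
  have him := le_upsilon_mul D t fun i => (c i).im
  have hsum : ∑ i, c i * t i =
      ((∑ i, (c i).re * t i : ℝ) : ℂ) + ((∑ i, (c i).im * t i : ℝ) : ℂ) * Complex.I := by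
    push_cast; simp only [Finset.sum_mul, ← Finset.sum_add_distrib]
    refine Finset.sum_congr rfl fun i _ => ?_
    conv_lhs => rw [← Complex.re_add_im (c i)]
    ring
  rw [hsum, Complex.normSq_add_mul_I]
  simp only [Complex.normSq_apply, ← sq, add_mul, Finset.sum_add_distrib, mul_add] at hre him ⊢
  linarith

end Upsilon

section NormalForm

variable (D t : Fin 3 → ℝ)

lemma isLinearMap_normalForm : IsLinearMap ℂ (normalForm D t) where
  map_add A B := by
    simp only [normalForm, Matrix.mul_add, trace_add, Fin.sum_univ_three]; module
  map_smul c A := by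
    simp only [normalForm, Matrix.mul_smul, trace_smul, smul_eq_mul, Fin.sum_univ_three]; module

lemma hsAdj_normalForm_one : hsAdj (normalForm D t) 1 = 1 :=
  hsAdj_eq_of_forall_trace fun B => by
    simp [normalForm, pauliXYZ, pauli, trace, Fin.sum_univ_two, Fin.sum_univ_three]
    ring

lemma hsAdj_normalForm_pauliXYZ (i : Fin 3) :
    hsAdj (normalForm D t) (pauliXYZ i) = (t i : ℂ) • 1 + (D i : ℂ) • pauliXYZ i :=
  hsAdj_eq_of_forall_trace fun B => by
    fin_cases i <;>
      simp [normalForm, pauliXYZ, pauli, trace, mul_apply, Fin.sum_univ_two, Fin.sum_univ_three] <;>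
      ring_nf
    simp only [Complex.I_sq, Complex.I_pow_three]
    ring

lemma frobSq_hsAdj_normalForm_le {τ : QMat} (hτ : trace τ = 0) :
    frobSq (hsAdj (normalForm D t) τ) ≤ Upsilon D t * frobSq τ := by
  set c : Fin 3 → ℂ := fun i => trace (pauliXYZ i * τ) / 2
  have hτc : τ = ∑ i, c i • pauliXYZ i := (pauliXYZ_expansion hτ).symm
  have hadj : hsAdj (normalForm D t) τ =
      ∑ a, (Fin.cons (∑ i, c i * t i) fun i => c i * D i : Fin 4 → ℂ) a • pauli a := by
    rw [hτc, hsAdj_sum_smul, Fin.sum_univ_succ (f := fun a => _ • pauli a)]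
    simp only [hsAdj_normalForm_pauliXYZ, smul_add, smul_smul, Finset.sum_add_distrib,
      ← Finset.sum_smul, Fin.cons_zero, Fin.cons_succ]
    simp [pauliXYZ, pauli, mul_comm]
  rw [hadj, frobSq_pauli_sum_smul, Fin.sum_univ_succ, hτc, frobSq_pauliXYZ_sum_smul]
  simp only [Fin.cons_zero, Fin.cons_succ, Complex.normSq_mul, Complex.normSq_ofReal, ← sq]
  linarith [le_upsilon_mul_complex D t c]

end NormalForm

lemma sum_ptm_hsAdj_mul (Φ : QMat → QMat) (y : Fin 4 → ℂ) (a : Fin 4) :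
    ∑ b, ptm (hsAdj Φ) a b * y b = trace (pauli a * hsAdj Φ (∑ b, y b • pauli b)) / 2 := by
  simp only [hsAdj_sum_smul, Matrix.mul_sum, Matrix.mul_smul, trace_sum, trace_smul, ptm,
    smul_eq_mul, Finset.sum_div]
  exact Finset.sum_congr rfl fun b _ => by ring

lemma sum_normSq_ptm_hsAdj_mul (Φ : QMat → QMat) (y : Fin 4 → ℂ) :
    ∑ a, Complex.normSq (∑ b, ptm (hsAdj Φ) a b * y b) =
      frobSq (hsAdj Φ (∑ b, y b • pauli b)) := by
  conv_rhs => rw [← pauli_expansion (hsAdj Φ _), frobSq_pauli_sum_smul]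
  simp only [sum_ptm_hsAdj_mul]

section NoisyQubit

variable {D t : Fin 3 → ℝ} {U V : QMat} {N : QMat → QMat}

lemma hsAdj_eq_of_normalForm (hN : ∀ ρ, N ρ = U * normalForm D t (V * ρ * Vᴴ) * Uᴴ) (A : QMat) :
    hsAdj N A = Vᴴ * hsAdj (normalForm D t) (Uᴴ * A * U) * V := by
  rw [show N = _ from funext hN, hsAdj_conj (isLinearMap_normalForm D t)]

lemma hsAdj_one_of_normalForm (hU : IsUnitary U) (hV : IsUnitary V)
    (hN : ∀ ρ, N ρ = U * normalForm D t (V * ρ * Vᴴ) * Uᴴ) : hsAdj N 1 = 1 := by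
  rw [hsAdj_eq_of_normalForm hN, Matrix.mul_one, hU.2, hsAdj_normalForm_one, Matrix.mul_one, hV.2]

lemma frobSq_hsAdj_le_of_normalForm (hU : IsUnitary U) (hV : IsUnitary V)
    (hN : ∀ ρ, N ρ = U * normalForm D t (V * ρ * Vᴴ) * Uᴴ) {Y : QMat} (hY : trace Y = 0) :
    frobSq (hsAdj N Y) ≤ Upsilon D t * frobSq Y := by
  rw [hsAdj_eq_of_normalForm hN, frobSq_conjTranspose_mul_mul hV.1,
    ← frobSq_conjTranspose_mul_mul hU.1 Y]
  exact frobSq_hsAdj_normalForm_le D t (by rw [trace_conjTranspose_mul_mul hU.1, hY])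

lemma sum_normSq_ptm_hsAdj_mul_le (hU : IsUnitary U) (hV : IsUnitary V)
    (hN : ∀ ρ, N ρ = U * normalForm D t (V * ρ * Vᴴ) * Uᴴ) {y : Fin 4 → ℂ} (hy : y 0 = 0) :
    ∑ a, Complex.normSq (∑ b, ptm (hsAdj N) a b * y b) ≤
      Upsilon D t * ∑ b, Complex.normSq (y b) := by
  rw [sum_normSq_ptm_hsAdj_mul, ← frobSq_pauli_sum_smul]
  exact frobSq_hsAdj_le_of_normalForm hU hV hN (by rw [trace_pauli_sum_smul, hy, mul_zero])

lemma sum_normSq_ptm_hsAdj_mul_of_identity (hU : IsUnitary U) (hV : IsUnitary V)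
    (hN : ∀ ρ, N ρ = U * normalForm D t (V * ρ * Vᴴ) * Uᴴ) {y : Fin 4 → ℂ}
    (hy : ∀ b ≠ 0, y b = 0) :
    ∑ a, Complex.normSq (∑ b, ptm (hsAdj N) a b * y b) = ∑ b, Complex.normSq (y b) := by
  have hY : ∑ b, y b • pauli b = y 0 • 1 :=
    (Fintype.sum_eq_single 0 fun b hb => by rw [hy b hb, zero_smul]).trans rfl
  rw [sum_normSq_ptm_hsAdj_mul, ← frobSq_pauli_sum_smul, hY, (isLinearMap_hsAdj N).map_smul,
    hsAdj_one_of_normalForm hU hV hN]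

end NoisyQubit

section TensorBound

variable {ι : Type*} [Fintype ι]

lemma sum_fin_succ_pi {M : Type*} [AddCommMonoid M] {n : ℕ} (g : (Fin (n + 1) → ι) → M) :
    ∑ s, g s = ∑ b, ∑ f : Fin n → ι, g (Fin.cons b f) := by
  rw [← Fintype.sum_prod_type']
  exact (Fintype.sum_equiv (Fin.consEquiv fun _ => ι) _ _ fun _ => rfl).symm

theorem sum_normSq_tensor_mulVec_le {n : ℕ} (m : Fin n → ι → ι → ℂ) (c : Fin n → ℝ)
    (hc : ∀ k, 0 ≤ c k) (S : Fin n → Set ι)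
    (hm : ∀ k (y : ι → ℂ), (∀ b ∉ S k, y b = 0) →
      ∑ a, Complex.normSq (∑ b, m k a b * y b) ≤ c k * ∑ b, Complex.normSq (y b))
    (x : (Fin n → ι) → ℂ) (hx : ∀ r ∉ Set.univ.pi S, x r = 0) :
    ∑ s : Fin n → ι, Complex.normSq (∑ r : Fin n → ι, (∏ k, m k (s k) (r k)) * x r) ≤
      (∏ k, c k) * ∑ r, Complex.normSq (x r) := by
  induction n with
  | zero => simp
  | succ n ih =>
    -- `F b` is the kernel of the last `n` sites applied to the slice `x (Fin.cons b ·)`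
    set F : ι → (Fin n → ι) → ℂ := fun b s' =>
      ∑ r', (∏ k, m k.succ (s' k) (r' k)) * x (Fin.cons b r')
    have hsplit : ∀ a s', ∑ r, (∏ k, m k ((Fin.cons a s' : Fin (n + 1) → ι) k) (r k)) * x r =
        ∑ b, m 0 a b * F b s' := fun a s' => by
      rw [sum_fin_succ_pi]
      refine Finset.sum_congr rfl fun b _ => ?_
      simp only [F, Finset.mul_sum, Fin.prod_univ_succ, Fin.cons_zero, Fin.cons_succ, mul_assoc]
    have hfirst : ∀ s', ∑ a, Complex.normSq (∑ b, m 0 a b * F b s') ≤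
        c 0 * ∑ b, Complex.normSq (F b s') := fun s' =>
      hm 0 (F · s') fun b hb => Finset.sum_eq_zero fun r' _ => by
        rw [hx _ fun h => hb (by simpa using h 0 (Set.mem_univ _)), mul_zero]
    have hrest : ∀ b, ∑ s', Complex.normSq (F b s') ≤
        (∏ k : Fin n, c k.succ) * ∑ r', Complex.normSq (x (Fin.cons b r')) := fun b =>
      ih (fun k => m k.succ) (fun k => c k.succ) (fun k => hc k.succ) (fun k => S k.succ)
        (fun k => hm k.succ) _ fun r' hr' => hx _ fun h => hr' fun k _ => by
          simpa using h k.succ (Set.mem_univ _)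
    calc ∑ s : Fin (n + 1) → ι, Complex.normSq (∑ r : Fin (n + 1) → ι, (∏ k, m k (s k) (r k)) * x r)
        = ∑ s', ∑ a, Complex.normSq (∑ b, m 0 a b * F b s') := by
          rw [sum_fin_succ_pi, Finset.sum_comm]; simp only [hsplit]
      _ ≤ ∑ s', c 0 * ∑ b, Complex.normSq (F b s') := Finset.sum_le_sum fun s' _ => hfirst s'
      _ = c 0 * ∑ b, ∑ s', Complex.normSq (F b s') := by rw [← Finset.mul_sum, Finset.sum_comm]
      _ ≤ c 0 * ∑ b, (∏ k : Fin n, c k.succ) * ∑ r', Complex.normSq (x (Fin.cons b r')) :=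
          mul_le_mul_of_nonneg_left (Finset.sum_le_sum fun b _ => hrest b) (hc 0)
      _ = (∏ k, c k) * ∑ r, Complex.normSq (x r) := by
          rw [sum_fin_succ_pi (fun r => Complex.normSq (x r)), Fin.prod_univ_succ, ← Finset.mul_sum,
            mul_assoc]

end TensorBound

lemma tensorPow_obsOf {n : ℕ} (Φ : QMat → QMat) (a : (Fin n → Fin 4) → ℝ) :
    tensorPow n Φ (obsOf a) =
      ∑ s, (∑ r, (∏ k, ptm Φ (s k) (r k)) * (a r : ℂ)) • pauliString s := by
  have hcoeff : ∀ r, trace (pauliString r * obsOf a) / (2 : ℂ) ^ n = a r := fun r => by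
    rw [obsOf, trace_mul_sum_smul_of_orthogonal trace_pauliString_mul]
    simp
  simp only [tensorPow, tensorMap, hcoeff, Finset.sum_smul]

theorem stmt_2_general (n : ℕ) (D t : Fin 3 → ℝ) (U V : QMat)
    (hU : IsUnitary U) (hV : IsUnitary V)
    (N : QMat → QMat)
    (hNform : ∀ ρ, N ρ = U * normalForm D t (V * ρ * Vᴴ) * Uᴴ)
    (A : Finset (Fin n))
    (a : (Fin n → Fin 4) → ℝ) (ha : ∀ s, psupp s ≠ A → a s = 0) :
    frobSq (tensorPow n (hsAdj N) (obsOf a)) ≤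
      Upsilon D t ^ A.card * frobSq (obsOf a) := by
  have hsite : ∀ k (y : Fin 4 → ℂ), (∀ b ∉ supportPattern A k, y b = 0) →
      ∑ a, Complex.normSq (∑ b, ptm (hsAdj N) a b * y b) ≤
        (if k ∈ A then Upsilon D t else 1) * ∑ b, Complex.normSq (y b) := by
    intro k y hy
    by_cases hk : k ∈ A
    · simp only [supportPattern, hk, if_true] at hy ⊢
      exact sum_normSq_ptm_hsAdj_mul_le hU hV hNform (hy 0 (by simp))
    · simp only [supportPattern, hk, if_false] at hy ⊢
      exact (sum_normSq_ptm_hsAdj_mul_of_identity hU hV hNform hy).trans_le (one_mul _).ge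
  have hsupp : ∀ s ∉ Set.univ.pi (supportPattern A), ((a s : ℝ) : ℂ) = 0 := fun s hs => by
    rw [ha s (mt mem_pi_supportPattern_iff.2 hs), Complex.ofReal_zero]
  have hprod : ∏ k, (if k ∈ A then Upsilon D t else 1) = Upsilon D t ^ A.card := by
    simp [Finset.prod_ite_mem]
  rw [tensorPow_obsOf, frobSq_pauliString_sum_smul, obsOf, frobSq_pauliString_sum_smul, ← hprod]
  exact sum_normSq_tensor_mulVec_le _ _ (fun k => by split_ifs <;> simp [upsilon_nonneg]) _
    hsite _ hsupp

/-- (General upper bound on contraction coefficients.)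
For `N(ρ) = U N'(V ρ Vᴴ) Uᴴ` and any observable supported exactly on `A ≠ ∅`:
`‖N^{†⊗n}(O_A)‖_F² ≤ Υ(D,t)^{|A|}·‖O_A‖_F²`. -/
theorem stmt_2 (n : ℕ) (D t : Fin 3 → ℝ) (U V : QMat)
    (hU : IsUnitary U) (hV : IsUnitary V)
    (N : QMat → QMat)
    (hNform : ∀ ρ, N ρ = U * normalForm D t (V * ρ * Vᴴ) * Uᴴ)
    (A : Finset (Fin n)) (hA : A.Nonempty)
    (a : (Fin n → Fin 4) → ℝ) (ha : ∀ s, psupp s ≠ A → a s = 0) :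
    frobSq (tensorPow n (hsAdj N) (obsOf a)) ≤
      Upsilon D t ^ A.card * frobSq (obsOf a) :=
  stmt_2_general n D t U V hU hV N hNform A a ha

end
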